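/- arXiv:math/0201041 — 2 statements merged into one kernel-verified Lean document; each statement's English description precedes it below -/
import Mathlib

section
/- A strictly increasing sequence (column) C of letters from the alphabet C_n = {1 < 2 < ... < n < n̄ < ... < 1̄} is KN-admissible (i.e., for every pair (z, z̄) of letters occurring in C at positions p < q one has q - p ≥ h(C) - z + 1, where h(C) is the length of C) if and only if for every m in {1,...,n}, the number N(m) of letters x in C with x ≤ m or x ≥ m̄ satisfies N(m) ≤ m. -/
/-! In a strictly increasing column of height `h` containing `z` at position `p` and `z̄` at
position `q` (0-based), the entries counted by `N(z)` are exactly the first `p + 1` and the last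
`h - q`, so the pair condition at `z` says precisely `N(z) ≤ z`. Conversely, `N(m)` exceeds
`N(m - 1)` by at most 2, and by 2 only when both `m` and `m̄` occur; so at the least `m` with
`N(m) > m` the pair `(m, m̄)` occurs and violates the pair condition. -/

/-! Letters of `C_n = {1 < ... < n < n̄ < ... < 1̄}` are encoded as natural
numbers in `[1, 2n]`: the unbarred letter `m` is `m` and the barred letter
`m̄` is `2n+1-m`. -/

/-- A column over `C_n`: a strictly increasing list of letters of `C_n`. -/
def IsColumn (n : ℕ) (C : List ℕ) : Prop :=
  C.Chain' (· < ·) ∧ ∀ x ∈ C, 1 ≤ x ∧ x ≤ 2*n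

/-- `N(m)`: the number of entries `x` of `C` with `x ≤ m` or `x ≥ m̄`. -/
def Ncount (n m : ℕ) (C : List ℕ) : ℕ :=
  (C.filter (fun x => decide (x ≤ m ∨ 2*n+1-m ≤ x))).length

/-- KN-admissibility via the counting condition `N(m) ≤ m` for all `m ≤ n`. -/
def KNAdmissible (n : ℕ) (C : List ℕ) : Prop :=
  ∀ m, 1 ≤ m → m ≤ n → Ncount n m C ≤ m

/-- KN-coadmissibility: for each pair `(z, z̄)` occurring in the column,
the number of entries `x` with `z ≤ x ≤ z̄` is at most `n - z + 1`. -/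
def Coadmissible (n : ℕ) (C : List ℕ) : Prop :=
  ∀ z, 1 ≤ z → z ≤ n → z ∈ C → (2*n+1-z) ∈ C →
    (C.filter (fun x => decide (z ≤ x ∧ x ≤ 2*n+1-z))).length ≤ n - z + 1

/-- The set `I = {z_1 > z_2 > ...}` of unbarred letters `z` such that both
`z` and `z̄` occur in `C`, listed in decreasing order. -/
def dupList (n : ℕ) (C : List ℕ) : List ℕ :=
  ((List.range (n+1)).filter (fun z => decide (1 ≤ z ∧ z ∈ C ∧ (2*n+1-z) ∈ C))).reverse

/-- `t` is an unbarred letter `< bound` such that neither `t` nor `t̄` occurs in `C`. -/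
def FreeLt (n : ℕ) (C : List ℕ) (bound t : ℕ) : Prop :=
  1 ≤ t ∧ t < bound ∧ t ∉ C ∧ (2*n+1-t) ∉ C

/-- `J = {t_1 > ... > t_r}` is the splitting set of `C`: `t_1` is the greatest
letter `< z_1` free in `C`, and `t_i` is the greatest letter `< min(t_{i-1}, z_i)`
free in `C`. -/
def IsSplittingSet (n : ℕ) (C J : List ℕ) : Prop :=
  J.length = (dupList n C).length ∧
  ∀ i < J.length,
    FreeLt n C (if i = 0 then (dupList n C).getD 0 0
                else min (J.getD (i-1) 0) ((dupList n C).getD i 0)) (J.getD i 0) ∧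
    ∀ s, FreeLt n C (if i = 0 then (dupList n C).getD 0 0
                else min (J.getD (i-1) 0) ((dupList n C).getD i 0)) s → s ≤ J.getD i 0

/-- `C` can be split. -/
def CanSplit (n : ℕ) (C : List ℕ) : Prop := ∃ J, IsSplittingSet n C J

/-- `lC`: replace each duplicated unbarred letter `z_i` by `t_i` and reorder. -/
def lCol (n : ℕ) (C I J : List ℕ) : List ℕ :=
  List.insertionSort (· ≤ ·)
    (C.map fun x => if x ∈ I ∧ x ≤ n then J.getD (I.idxOf x) x else x)

/-- `rC`: replace each duplicated barred letter `z̄_i` by `t̄_i` and reorder. -/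
def rCol (n : ℕ) (C I J : List ℕ) : List ℕ :=
  List.insertionSort (· ≤ ·)
    (C.map fun x => if (2*n+1-x) ∈ I ∧ n < x then 2*n+1 - J.getD (I.idxOf (2*n+1-x)) (2*n+1-x) else x)

/-- `C*`: the column made of the unbarred letters of `lC` followed by the
barred letters of `rC`. -/
def starCol (n : ℕ) (C I J : List ℕ) : List ℕ :=
  (lCol n C I J).filter (fun x => decide (x ≤ n)) ++
  (rCol n C I J).filter (fun x => decide (n < x))

open Classical in
noncomputable def theSplit (n : ℕ) (C : List ℕ) : List ℕ :=
  if h : CanSplit n C then h.choose else []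

noncomputable def lC (n : ℕ) (C : List ℕ) : List ℕ := lCol n C (dupList n C) (theSplit n C)
noncomputable def rC (n : ℕ) (C : List ℕ) : List ℕ := rCol n C (dupList n C) (theSplit n C)

/-- The map `Φ : C ↦ C*` from admissible to coadmissible columns. -/
noncomputable def PhiMap (n : ℕ) (C : List ℕ) : List ℕ :=
  starCol n C (dupList n C) (theSplit n C)

/-- `w` is a non-admissible column word all of whose strict factors are admissible. -/
def MinimalNonAdm (n : ℕ) (w : List ℕ) : Prop :=
  IsColumn n w ∧ ¬ KNAdmissible n w ∧
  ∀ u, u <:+: w → u.length < w.length → KNAdmissible n u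

/-- The lowest unbarred letter `z` with `(z, z̄)` in `w` and `N(z) = z + 1`. -/
def badLetter (n : ℕ) (w : List ℕ) : ℕ :=
  (((List.range (n+1)).filter (fun z =>
      decide (1 ≤ z ∧ z ∈ w ∧ (2*n+1-z) ∈ w ∧ Ncount n z w = z+1)))).headD 0

/-- `w̃`: the word obtained from `w` by erasing the pair `(z, z̄)`, `z = badLetter`. -/
def contract (n : ℕ) (w : List ℕ) : List ℕ :=
  w.filter (fun x => decide (x ≠ badLetter n w ∧ x ≠ 2*n+1 - badLetter n w))

/-! ### Crystal operators via the signature rule. -/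

/-- The `i`-signature of `w`: `+` (true) for letters `i`, `(i+1)bar`; `−` (false)
for letters `i+1`, `ī`; each with its position in `w`. -/
def sigList (n i : ℕ) (w : List ℕ) : List (Bool × ℕ) :=
  (w.zipIdx.map Prod.swap).filterMap (fun p =>
    if p.2 = i ∨ p.2 = 2*n - i then some (true, p.1)
    else if p.2 = i+1 ∨ p.2 = 2*n+1-i then some (false, p.1)
    else none)

/-- One step of the `+−` cancellation, using a stack. -/
def reduceStep (st : List (Bool × ℕ)) (it : Bool × ℕ) : List (Bool × ℕ) :=
  match st, it with
  | (true, _) :: rest, (false, _) => rest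
  | _, _ => it :: st

/-- The reduced signature `ρ_i(w) = −^r +^s` (with positions). -/
def reducedSig (l : List (Bool × ℕ)) : List (Bool × ℕ) := (l.foldl reduceStep []).reverse

/-- Kashiwara operator `f̃_i` on words (`none` encodes `0`). -/
def fOp (n i : ℕ) (w : List ℕ) : Option (List ℕ) :=
  match (reducedSig (sigList n i w)).find? (fun s => s.1) with
  | some s => some (w.set s.2 (if w.getD s.2 0 = i then i+1 else 2*n+1-i))
  | none => none

/-- Kashiwara operator `ẽ_i` on words (`none` encodes `0`). -/
def eOp (n i : ℕ) (w : List ℕ) : Option (List ℕ) :=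
  match ((reducedSig (sigList n i w)).reverse.find? (fun s => !s.1)) with
  | some s => some (w.set s.2 (if w.getD s.2 0 = i+1 then i else 2*n - i))
  | none => none

/-- `ε_i(w)`. -/
def epsC (n i : ℕ) (w : List ℕ) : ℕ :=
  ((reducedSig (sigList n i w)).filter (fun s => !s.1)).length

/-- `φ_i(w)`. -/
def phiC (n i : ℕ) (w : List ℕ) : ℕ :=
  ((reducedSig (sigList n i w)).filter (fun s => s.1)).length

/-- One crystal edge of some color `i ∈ {1,...,n}` (in either direction). -/
def CrystalStep (n : ℕ) (w w' : List ℕ) : Prop :=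
  ∃ i, 1 ≤ i ∧ i ≤ n ∧ (fOp n i w = some w' ∨ eOp n i w = some w')

/-- Same connected component of the crystal graph `G_n`. -/
def SameComp (n : ℕ) : List ℕ → List ℕ → Prop := Relation.EqvGen (CrystalStep n)

/-- One crystal edge of color `i ∈ {1,...,n−1}` (the `U_q(sl_n)` structure). -/
def CrystalStepA (n : ℕ) (w w' : List ℕ) : Prop :=
  ∃ i, 1 ≤ i ∧ i + 1 ≤ n ∧ (fOp n i w = some w' ∨ eOp n i w = some w')

/-- Same `U_q(sl_n)`-connected component (arrows of color `n` removed). -/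
def SameCompA (n : ℕ) : List ℕ → List ℕ → Prop := Relation.EqvGen (CrystalStepA n)

/-- Highest weight vertex: `ẽ_i(w) = 0` for all `i = 1,...,n`. -/
def HighestWt (n : ℕ) (w : List ℕ) : Prop := ∀ i, 1 ≤ i → i ≤ n → eOp n i w = none

/-- The weight `d(w)`: `d_i = #(i in w) − #(ī in w)`. -/
def wt (n : ℕ) (w : List ℕ) (i : ℕ) : ℤ := (w.count i : ℤ) - (w.count (2*n+1-i) : ℤ)

/-- Apply the sequence of operators `f̃_{i}` for `i ∈ l` successively. -/
def applyF (n : ℕ) (l : List ℕ) (w : List ℕ) : Option (List ℕ) :=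
  l.foldl (fun ow i => ow.bind (fOp n i)) (some w)

/-- `w1 ∼ w2`: same place in two isomorphic connected components of `G_n`. -/
def SamePlace (n : ℕ) (w1 w2 : List ℕ) : Prop :=
  ∃ w10 w20 l, HighestWt n w10 ∧ HighestWt n w20 ∧
    (∀ i, 1 ≤ i → i ≤ n → wt n w10 i = wt n w20 i) ∧
    (∀ i ∈ l, 1 ≤ i ∧ i ≤ n) ∧
    applyF n l w10 = some w1 ∧ applyF n l w20 = some w2

/-! ### The plactic relations. -/

/-- The relations `R1` and `R2` (on bare length-3 words). -/
inductive KnuthRel (n : ℕ) : List ℕ → List ℕ → Prop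
  | R1a (x y z : ℕ) : 1 ≤ x → x ≤ y → y < z → z ≤ 2*n → z ≠ 2*n+1-x →
      KnuthRel n [y,z,x] [y,x,z]
  | R1b (x y z : ℕ) : 1 ≤ x → x < y → y ≤ z → z ≤ 2*n → z ≠ 2*n+1-x →
      KnuthRel n [x,z,y] [z,x,y]
  | R2a (x y : ℕ) : 1 < x → x ≤ n → x ≤ y → y ≤ 2*n+1-x →
      KnuthRel n [y, 2*n+2-x, x-1] [y, x, 2*n+1-x]
  | R2b (x y : ℕ) : 1 < x → x ≤ n → x ≤ y → y ≤ 2*n+1-x →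
      KnuthRel n [x, 2*n+1-x, y] [2*n+2-x, x-1, y]

/-- One rewriting step, in context, by `R1`, `R2` or the contraction `R3`. -/
inductive PlStep (n : ℕ) : List ℕ → List ℕ → Prop
  | knuth (u v w w' : List ℕ) : KnuthRel n w w' → PlStep n (u++w++v) (u++w'++v)
  | contr (u v w : List ℕ) : MinimalNonAdm n w → PlStep n (u++w++v) (u++(contract n w)++v)

/-- The plactic congruence of `Pl(C_n)`. -/
def Plactic (n : ℕ) : List ℕ → List ℕ → Prop := Relation.EqvGen (PlStep n)

/-- One rewriting step in context using only `R1` and `R2`. -/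
inductive Pl12Step (n : ℕ) : List ℕ → List ℕ → Prop
  | knuth (u v w w' : List ℕ) : KnuthRel n w w' → Pl12Step n (u++w++v) (u++w'++v)

/-- The congruence generated by `R1` and `R2` only. -/
def Plactic12 (n : ℕ) : List ℕ → List ℕ → Prop := Relation.EqvGen (Pl12Step n)

/-- Relation on `Option`s: `none ↔ none`, `some ↔ some` related values. -/
def OptRel (r : List ℕ → List ℕ → Prop) : Option (List ℕ) → Option (List ℕ) → Prop
  | none, none => True
  | some a, some b => r a b
  | _, _ => False

/-! ### Symplectic tableaux. -/

/-- `C ≤ D` for columns with `h(C) ≥ h(D)`: rows of `CD` weakly increasing. -/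
def ColLe (C D : List ℕ) : Prop :=
  D.length ≤ C.length ∧ ∀ k < D.length, C.getD k 0 ≤ D.getD k 0

/-- A symplectic tableau: a list of admissible columns, left to right, with
`rC_i ≤ lC_{i+1}` (Sheats' description of the KN conditions). -/
def IsSympTab (n : ℕ) (T : List (List ℕ)) : Prop :=
  (∀ C ∈ T, IsColumn n C ∧ KNAdmissible n C) ∧
  T.Chain' (fun C D => ColLe (rC n C) (lC n D))

/-- The reading of a tableau: columns from right to left, top to bottom. -/
def reading (T : List (List ℕ)) : List ℕ := T.reverse.foldr (· ++ ·) []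

/-- Number of boxes in row `k` (0-based) of the shape of `T`. -/
def rowLenF (T : List (List ℕ)) (k : ℕ) : ℕ :=
  (T.filter (fun C => decide (k < C.length))).length

/-- `g` is obtained from `f` by adding exactly one box (in some row). -/
def AddOneBox (f g : ℕ → ℕ) : Prop := ∃ j, g j = f j + 1 ∧ ∀ k, k ≠ j → g k = f k

/-- Two diagrams differ by exactly one box. -/
def DiffOneBox (f g : ℕ → ℕ) : Prop := AddOneBox f g ∨ AddOneBox g f

/-- An `n`-oscillating tableau of length `l` (diagrams as row-length functions,
normalized to `0` outside `{1,...,l}`). -/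
def IsOscTab (n l : ℕ) (Q : ℕ → ℕ → ℕ) : Prop :=
  (∀ k, Q 0 k = 0) ∧ (∀ i, l < i → ∀ k, Q i k = 0) ∧
  (∀ i < l, DiffOneBox (Q i) (Q (i+1))) ∧
  (∀ i k, Q i (k+1) ≤ Q i k) ∧
  (∀ i k, n ≤ k → Q i k = 0)

namespace List

variable {α : Type*} [LinearOrder α] {l : List α}

theorem SortedLT.countP_le_getElem (hl : l.SortedLT) (i : ℕ) (hi : i < l.length) :
    l.countP (· ≤ l[i]) = i + 1 := by
  induction l generalizing i with
  | nil => simp at hi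
  | cons a t ih =>
    obtain ⟨ha, ht⟩ := pairwise_cons.1 hl.pairwise
    cases i with
    | zero =>
      simpa [countP_eq_zero] using fun x hx => ha x hx
    | succ k =>
      have hk : k < t.length := Nat.succ_lt_succ_iff.1 hi
      have hak : a < t[k] := ha _ (getElem_mem hk)
      rw [getElem_cons_succ, countP_cons_of_pos (p := fun x => decide (x ≤ t[k]))
        (by simpa using hak.le), ih ht.sortedLT k hk]

theorem SortedLT.countP_getElem_le (hl : l.SortedLT) (i : ℕ) (hi : i < l.length) :
    l.countP (l[i] ≤ ·) = l.length - i := by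
  induction l generalizing i with
  | nil => simp at hi
  | cons a t ih =>
    obtain ⟨ha, ht⟩ := pairwise_cons.1 hl.pairwise
    cases i with
    | zero =>
      simpa [countP_eq_length] using fun x hx => (ha x hx).le
    | succ k =>
      have hk : k < t.length := Nat.succ_lt_succ_iff.1 hi
      have hak : a < t[k] := ha _ (getElem_mem hk)
      rw [getElem_cons_succ, countP_cons_of_neg (p := fun x => decide (t[k] ≤ x))
        (by simpa using hak), ih ht.sortedLT k hk, length_cons, Nat.add_sub_add_right]

end List

theorem ncount_eq_countP_add_countP {n m : ℕ} (hmn : m ≤ n) (C : List ℕ) :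
    Ncount n m C = C.countP (· ≤ m) + C.countP (2*n+1-m ≤ ·) := by
  rw [Ncount, ← List.countP_eq_length_filter]
  induction C with
  | nil => rfl
  | cons a t ih =>
    simp only [List.countP_cons, ih]
    by_cases h1 : a ≤ m <;> by_cases h2 : 2*n+1-m ≤ a <;> simp [h1, h2] <;> omega

theorem ncount_eq_ncount_sub_one_add_count {n m : ℕ} (hm : 1 ≤ m) (hmn : m ≤ n) (C : List ℕ) :
    Ncount n m C = Ncount n (m-1) C + C.count m + C.count (2*n+1-m) := by
  simp only [Ncount, ← List.countP_eq_length_filter]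
  induction C with
  | nil => rfl
  | cons a t ih =>
    simp only [List.countP_cons, List.count_cons, ih, beq_iff_eq, decide_eq_true_eq]
    split_ifs <;> omega

theorem ncount_zero_of_isColumn {n : ℕ} {C : List ℕ} (hC : IsColumn n C) : Ncount n 0 C = 0 := by
  rw [Ncount, List.length_eq_zero_iff, List.filter_eq_nil_iff]
  intro x hx
  have := hC.2 x hx
  simp only [decide_eq_true_eq]
  omega

theorem ncount_eq_of_getElem_eq {n z : ℕ} {C : List ℕ} (hC : C.SortedLT) (hzn : z ≤ n)
    {p q : ℕ} (hp : p < C.length) (hq : q < C.length) (hCp : C[p] = z) (hCq : C[q] = 2*n+1-z) :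
    Ncount n z C = p + 1 + (C.length - q) := by
  rw [ncount_eq_countP_add_countP hzn, ← hCp, hC.countP_le_getElem p hp, hCp, ← hCq,
    hC.countP_getElem_le q hq]

theorem mem_and_mem_of_ncount_sub_one_add_two_le {n m : ℕ} {C : List ℕ} (hC : C.Nodup)
    (hm : 1 ≤ m) (hmn : m ≤ n) (hjump : Ncount n (m-1) C + 2 ≤ Ncount n m C) :
    m ∈ C ∧ 2*n+1-m ∈ C := by
  have hcount := ncount_eq_ncount_sub_one_add_count hm hmn C
  have h₁ := List.nodup_iff_count_le_one.1 hC m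
  have h₂ := List.nodup_iff_count_le_one.1 hC (2*n+1-m)
  exact ⟨List.count_pos_iff.1 (by omega), List.count_pos_iff.1 (by omega)⟩

theorem stmt0_general (n : ℕ) (C : List ℕ) (hC : IsColumn n C) :
    (∀ p q z, p < q → q < C.length → 1 ≤ z → z ≤ n →
        C.getD p 0 = z → C.getD q 0 = 2*n+1-z →
        C.length - z + 1 ≤ q - p)
    ↔ KNAdmissible n C := by
  have hs : C.SortedLT := hC.1.sortedLT
  constructor
  · intro hpair
    suffices h : ∀ m ≤ n, Ncount n m C ≤ m from fun m _ hmn => h m hmn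
    intro m hmn
    induction m with
    | zero => exact (ncount_zero_of_isColumn hC).le
    | succ m ih =>
      by_contra! hlt
      obtain ⟨hz, hz'⟩ := mem_and_mem_of_ncount_sub_one_add_two_le hs.nodup (by omega) hmn
        (by have := ih (by omega); simp only [Nat.add_sub_cancel]; omega)
      obtain ⟨p, hp, hCp⟩ := List.mem_iff_getElem.1 hz
      obtain ⟨q, hq, hCq⟩ := List.mem_iff_getElem.1 hz'
      have hpq : p < q := hs.getElem_lt_getElem_iff.1 (by omega)
      have hN := ncount_eq_of_getElem_eq hs hmn hp hq hCp hCq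
      have := hpair p q (m+1) hpq hq (by omega) hmn (by rw [List.getD_eq_getElem _ _ hp, hCp])
        (by rw [List.getD_eq_getElem _ _ hq, hCq])
      omega
  · intro hadm p q z hpq hq hz hzn hCp hCq
    have hp : p < C.length := hpq.trans hq
    rw [List.getD_eq_getElem _ _ hp] at hCp
    rw [List.getD_eq_getElem _ _ hq] at hCq
    have hN := ncount_eq_of_getElem_eq hs hzn hp hq hCp hCq
    have := hadm z hz hzn
    omega

/-- A column is KN-admissible in the pair-position sense iff
`N(m) ≤ m` for all `m ∈ {1,...,n}`. -/
theorem stmt0 (n : ℕ) (hn : 1 ≤ n) (C : List ℕ) (hC : IsColumn n C) :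
    (∀ p q z, p < q → q < C.length → 1 ≤ z → z ≤ n →
        C.getD p 0 = z → C.getD q 0 = 2*n+1-z →
        C.length - z + 1 ≤ q - p)
    ↔ KNAdmissible n C :=
  stmt0_general n C hC
end

section
/- Let w be a word over C_n that is a non-admissible column word (strictly increasing) all of whose strict factors are admissible column words. Then there is a unique lowest unbarred letter z such that the pair (z, z̄) occurs in w and N(z) = z + 1 (where N(z) counts letters x of w with x ≤ z or x ≥ z̄), and moreover the condition N(z) > z for such a minimal word forces N(z) = z + 1 exactly. -/
/-! Dropping the first letter of `w` leaves an admissible strict factor and lowers each `N(m)`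
by at most one, so `N(m) ≤ m + 1` throughout. At the least `m` with `N(m) > m` we thus have
`N(m) = m + 1` while `N(m - 1) ≤ m - 1`; passing from `N(m - 1)` to `N(m)` only adds the letters
`m` and `m̄`, each at most once since `w` is strictly increasing, so both occur in `w`. -/

theorem List.countP_le_countP_add_count_add_count {α : Type*} [DecidableEq α]
    {p q : α → Bool} {a b : α} (h : ∀ x, q x → p x ∨ x = a ∨ x = b) (l : List α) :
    l.countP q ≤ l.countP p + l.count a + l.count b := by
  induction l with
  | nil => simp
  | cons c t ih =>
    simp only [List.countP_cons, List.count_cons, beq_iff_eq]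
    have := h c
    split_ifs <;> simp_all <;> omega

lemma ncount_cons_le (n m a : ℕ) (t : List ℕ) : Ncount n m (a :: t) ≤ Ncount n m t + 1 := by
  simp only [Ncount, List.filter_cons]
  split <;> simp

lemma ncount_le_ncount_pred_add (n m : ℕ) (w : List ℕ) :
    Ncount n m w ≤ Ncount n (m - 1) w + w.count m + w.count (2*n+1-m) := by
  simp only [Ncount, ← List.countP_eq_length_filter]
  refine List.countP_le_countP_add_count_add_count (fun x hx => ?_) w
  simp only [decide_eq_true_eq] at hx ⊢
  omega

namespace IsColumn

variable {n : ℕ} {w : List ℕ}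

lemma nodup (hw : IsColumn n w) : w.Nodup :=
  (List.isChain_iff_pairwise.mp hw.1).imp ne_of_lt

lemma ncount_zero (hw : IsColumn n w) : Ncount n 0 w = 0 := by
  simp only [Ncount, List.length_eq_zero_iff, List.filter_eq_nil_iff]
  intro x hx
  have := hw.2 x hx
  simp only [decide_eq_true_eq]
  omega

lemma mem_of_ncount_pred_add_two_le {m : ℕ} (hw : IsColumn n w)
    (h : Ncount n (m - 1) w + 2 ≤ Ncount n m w) : m ∈ w ∧ (2*n+1-m) ∈ w := by
  have hm := List.nodup_iff_count_le_one.mp hw.nodup m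
  have hm' := List.nodup_iff_count_le_one.mp hw.nodup (2*n+1-m)
  have := ncount_le_ncount_pred_add n m w
  exact ⟨List.count_pos_iff.mp (by omega), List.count_pos_iff.mp (by omega)⟩

end IsColumn

lemma MinimalNonAdm.ncount_eq_succ {n m : ℕ} {w : List ℕ} (hw : MinimalNonAdm n w)
    (hm1 : 1 ≤ m) (hmn : m ≤ n) (hlt : m < Ncount n m w) : Ncount n m w = m + 1 := by
  cases w with
  | nil => simp [Ncount] at hlt
  | cons a t =>
    have ht : Ncount n m t ≤ m :=
      hw.2.2 t (List.suffix_cons a t).isInfix (by simp) m hm1 hmn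
    have := ncount_cons_le n m a t
    omega

theorem stmt8_general (n : ℕ) (w : List ℕ) (hw : MinimalNonAdm n w) :
    (∃ z, (1 ≤ z ∧ z ≤ n ∧ z ∈ w ∧ (2*n+1-z) ∈ w ∧ Ncount n z w = z+1) ∧
       ∀ z', (1 ≤ z' ∧ z' ≤ n ∧ z' ∈ w ∧ (2*n+1-z') ∈ w ∧ Ncount n z' w = z'+1) →
         z ≤ z') ∧
    (∀ z, 1 ≤ z → z ≤ n → z ∈ w → (2*n+1-z) ∈ w → z < Ncount n z w →
      Ncount n z w = z+1) := by
  have hviol : ∃ m, 1 ≤ m ∧ m ≤ n ∧ m < Ncount n m w := by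
    simpa [KNAdmissible] using hw.2.1
  obtain ⟨hz1, hzn, hzlt⟩ := Nat.find_spec hviol
  set z := Nat.find hviol
  have hNz : Ncount n z w = z + 1 := hw.ncount_eq_succ hz1 hzn hzlt
  have hprev : Ncount n (z - 1) w ≤ z - 1 := by
    obtain hz | hz := eq_or_lt_of_le hz1
    · simp only [← hz, Nat.sub_self, hw.1.ncount_zero, le_refl]
    · have := Nat.find_min hviol (show z - 1 < z by omega)
      push Not at this
      exact this (by omega) (by omega)
  obtain ⟨hmem, hmem'⟩ := hw.1.mem_of_ncount_pred_add_two_le (m := z) (by omega)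
  exact ⟨⟨z, ⟨hz1, hzn, hmem, hmem', hNz⟩,
      fun z' ⟨h1, h2, _, _, h5⟩ => Nat.find_le ⟨h1, h2, by omega⟩⟩,
    fun z h1 h2 _ _ hlt => hw.ncount_eq_succ h1 h2 hlt⟩

/-- a minimal non-admissible column word has a unique lowest
unbarred letter `z` with `(z, z̄)` in `w` and `N(z) = z + 1`; moreover
`N(z) > z` forces `N(z) = z + 1` for such pairs. -/
theorem stmt8 (n : ℕ) (hn : 1 ≤ n) (w : List ℕ) (hw : MinimalNonAdm n w) :
    (∃ z, (1 ≤ z ∧ z ≤ n ∧ z ∈ w ∧ (2*n+1-z) ∈ w ∧ Ncount n z w = z+1) ∧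
       ∀ z', (1 ≤ z' ∧ z' ≤ n ∧ z' ∈ w ∧ (2*n+1-z') ∈ w ∧ Ncount n z' w = z'+1) →
         z ≤ z') ∧
    (∀ z, 1 ≤ z → z ≤ n → z ∈ w → (2*n+1-z) ∈ w → z < Ncount n z w →
      Ncount n z w = z+1) :=
  stmt8_general n w hw
end
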